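/- Suppose φ^α : S(n-2) → U(m_α) is a unitary representation whose matrices at every transposition are hermitian (φ^α(ij)⁺ = φ^α(ij)). Consider the block matrix Q(α) ∈ M((n-1)m_α, ℂ) with blocks Q^{ab} = d·I if a=b, Q^{ab} = I if exactly one of a,b equals n-1, and Q^{ab} = φ^α((ab)) if a≠b and a,b ≤ n-2. Then for every block vector x = (x_1,...,x_{n-1}) with x_i ∈ ℂ^{m_α}, one has x⁺ Q(α) x ≥ (d - n + 2) Σ_{i=1}^{n-1} ‖x_i‖². Consequently, if d > n-2 then Q(α) is positive definite and invertible. -/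

import Mathlib

/-!
Split `x` into blocks `x_a`. Then `x⁺ Q x = d Σ ‖x_a‖² + Σ_{a ≠ b} Re ⟨x_a, Q^{ab} x_b⟩`, and every
off-diagonal block is unitary, so expanding `‖x_a + Q^{ab} x_b‖² ≥ 0` bounds each cross term below
by `-(‖x_a‖² + ‖x_b‖²)/2`. Each `x_a` occurs in `2(n - 2)` ordered pairs `a ≠ b`, which gives
`x⁺ Q x ≥ (d - n + 2) Σ ‖x_a‖²`. Since transpositions act by hermitian matrices, `Q` is hermitian,
and for `d > n - 2` the bound makes it positive definite.
-/

open Matrix ComplexOrder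

lemma re_star_dotProduct_self {κ : Type*} [Fintype κ] (u : κ → ℂ) :
    (star u ⬝ᵥ u).re = ∑ i, ‖u i‖ ^ 2 := by
  simp only [dotProduct, Complex.re_sum, Pi.star_apply, Complex.star_def,
    ← Complex.normSq_eq_conj_mul_self, Complex.ofReal_re, Complex.sq_norm]

lemma neg_half_add_le_re_star_dotProduct_mulVec {κ : Type*} [Fintype κ] [DecidableEq κ]
    {U : Matrix κ κ ℂ} (hU : Uᴴ * U = 1) (u v : κ → ℂ) :
    -(∑ i, ‖u i‖ ^ 2 + ∑ i, ‖v i‖ ^ 2) / 2 ≤ (star u ⬝ᵥ U *ᵥ v).re := by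
  set w := U *ᵥ v
  have hw : star w ⬝ᵥ w = star v ⬝ᵥ v := by
    rw [star_mulVec, dotProduct_mulVec, vecMul_vecMul, hU, vecMul_one]
  have hwu : (star w ⬝ᵥ u).re = (star u ⬝ᵥ w).re := by
    rw [← star_star u, star_dotProduct_star, star_star, Complex.star_def, Complex.conj_re]
  have hexpand : star (u + w) ⬝ᵥ (u + w)
      = star u ⬝ᵥ u + star u ⬝ᵥ w + star w ⬝ᵥ u + star w ⬝ᵥ w := by
    simp only [star_add, add_dotProduct, dotProduct_add]; ring
  have h0 := (re_star_dotProduct_self (u + w)).ge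
  rw [hexpand] at h0
  simp only [Complex.add_re, hw, hwu, re_star_dotProduct_self] at h0
  have : 0 ≤ ∑ i, ‖(u + w) i‖ ^ 2 := by positivity
  linarith

lemma sum_sum_ite_eq {ι : Type*} [Fintype ι] [DecidableEq ι] (d : ℝ) (N : ι → ℝ) :
    ∑ a, ∑ b, (if a = b then d * N a else -(N a + N b) / 2)
      = (d - (Fintype.card ι - 1)) * ∑ a, N a := by
  have h : ∀ a b, (if a = b then d * N a else -(N a + N b) / 2)
      = -(N a + N b) / 2 + if a = b then (d + 1) * N a else 0 := by
    intro a b; split_ifs with h <;> [subst h; skip] <;> ring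
  simp only [h, Finset.sum_add_distrib, Finset.sum_ite_eq, Finset.mem_univ, if_true,
    ← Finset.sum_div, Finset.sum_neg_distrib, Finset.sum_const, Finset.card_univ, nsmul_eq_mul,
    ← Finset.mul_sum]
  ring

namespace Matrix

lemma IsHermitian.comp {ι κ R : Type*} [Star R] {B : Matrix ι ι (Matrix κ κ R)}
    (hB : B.IsHermitian) : (comp ι ι κ κ R B).IsHermitian := by
  ext ⟨a, i⟩ ⟨b, j⟩
  simp [← congrFun (congrFun hB a) b]

variable {ι κ : Type*} [Fintype ι] [Fintype κ]

lemma dotProduct_comp_mulVec {R : Type*} [NonUnitalNonAssocSemiring R]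
    (B : Matrix ι ι (Matrix κ κ R)) (u v : ι × κ → R) :
    u ⬝ᵥ comp ι ι κ κ R B *ᵥ v
      = ∑ a, ∑ b, Function.curry u a ⬝ᵥ B a b *ᵥ Function.curry v b := by
  simp only [dotProduct, mulVec, Fintype.sum_prod_type, Finset.mul_sum, comp_apply,
    Function.curry_apply]
  exact Finset.sum_congr rfl fun a _ => Finset.sum_comm

lemma PosDef.of_mul_sum_norm_sq_le {M : Matrix κ κ ℂ} (hM : M.IsHermitian) {c : ℝ} (hc : 0 < c)
    (h : ∀ x, c * ∑ i, ‖x i‖ ^ 2 ≤ (star x ⬝ᵥ M *ᵥ x).re) : M.PosDef := by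
  refine .of_dotProduct_mulVec_pos hM fun x hx => Complex.lt_def.mpr ⟨?_, ?_⟩
  · have : 0 < ∑ i, ‖x i‖ ^ 2 := by
      rw [← re_star_dotProduct_self]
      exact (Complex.lt_def.mp (dotProduct_star_self_pos_iff.mpr hx)).1
    simpa using (mul_pos hc this).trans_le (h x)
  · simpa using (hM.im_star_dotProduct_mulVec_self x).symm

lemma sub_card_mul_sum_norm_sq_le_re_comp [DecidableEq ι] [DecidableEq κ]
    (B : Matrix ι ι (Matrix κ κ ℂ)) (d : ℝ) (hdiag : ∀ a, B a a = (d : ℂ) • 1)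
    (hunit : ∀ a b, a ≠ b → (B a b)ᴴ * B a b = 1) (x : ι × κ → ℂ) :
    (d - (Fintype.card ι - 1)) * ∑ v, ‖x v‖ ^ 2 ≤ (star x ⬝ᵥ comp ι ι κ κ ℂ B *ᵥ x).re := by
  set N : ι → ℝ := fun a => ∑ i, ‖x (a, i)‖ ^ 2
  have hblock : ∀ a b, (if a = b then d * N a else -(N a + N b) / 2)
      ≤ (star (Function.curry x a) ⬝ᵥ B a b *ᵥ Function.curry x b).re := by
    intro a b
    split_ifs with hab
    · subst hab
      rw [hdiag, smul_mulVec, one_mulVec, dotProduct_smul, smul_eq_mul, Complex.re_ofReal_mul,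
        re_star_dotProduct_self]
      rfl
    · exact neg_half_add_le_re_star_dotProduct_mulVec (hunit a b hab) _ _
  have hcurry : ∀ a, Function.curry (star x) a = star (Function.curry x a) := fun _ => rfl
  rw [Fintype.sum_prod_type, ← sum_sum_ite_eq, dotProduct_comp_mulVec, Complex.re_sum]
  simp only [hcurry, Complex.re_sum]
  exact Finset.sum_le_sum fun a _ => Finset.sum_le_sum fun b _ => hblock a b

end Matrix

section BlockQ

variable {t m : ℕ} (φ : Equiv.Perm (Fin t) →* Matrix (Fin m) (Fin m) ℂ)

def offDiagBlock (a b : Fin (t + 1)) : Matrix (Fin m) (Fin m) ℂ :=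
  if h : a = Fin.last t ∨ b = Fin.last t then 1
  else φ (Equiv.swap (a.castPred fun h' => h (.inl h')) (b.castPred fun h' => h (.inr h')))

def blockQ (d : ℝ) : Matrix (Fin (t + 1)) (Fin (t + 1)) (Matrix (Fin m) (Fin m) ℂ) :=
  of fun a b => if a = b then (d : ℂ) • 1 else offDiagBlock φ a b

variable {φ}

lemma conjTranspose_offDiagBlock_mul_self (hunit : ∀ σ, (φ σ)ᴴ * φ σ = 1) (a b : Fin (t + 1)) :
    (offDiagBlock φ a b)ᴴ * offDiagBlock φ a b = 1 := by
  unfold offDiagBlock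
  split
  · simp
  · exact hunit _

lemma conjTranspose_offDiagBlock
    (hherm : ∀ i j : Fin t, (φ (Equiv.swap i j))ᴴ = φ (Equiv.swap i j)) (a b : Fin (t + 1)) :
    (offDiagBlock φ b a)ᴴ = offDiagBlock φ a b := by
  unfold offDiagBlock
  by_cases h : b = Fin.last t ∨ a = Fin.last t
  · rw [dif_pos h, dif_pos h.symm, conjTranspose_one]
  · rw [dif_neg h, dif_neg fun h' => h h'.symm, hherm, Equiv.swap_comm]

lemma blockQ_isHermitian (hherm : ∀ i j : Fin t, (φ (Equiv.swap i j))ᴴ = φ (Equiv.swap i j))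
    (d : ℝ) : (blockQ φ d).IsHermitian := by
  ext a b : 1
  by_cases hab : a = b
  · subst hab
    simp [blockQ, conjTranspose_apply]
  · simp [blockQ, conjTranspose_apply, hab, Ne.symm hab, star_eq_conjTranspose,
      conjTranspose_offDiagBlock hherm]

end BlockQ

theorem stmt_9_general (t m : ℕ) (d : ℝ)
    (φ : Equiv.Perm (Fin t) →* Matrix (Fin m) (Fin m) ℂ)
    (hunit : ∀ σ, (φ σ)ᴴ * φ σ = 1)
    (hherm : ∀ i j : Fin t, (φ (Equiv.swap i j))ᴴ = φ (Equiv.swap i j)) :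
    let Q : Matrix (Fin (t + 1) × Fin m) (Fin (t + 1) × Fin m) ℂ :=
      Matrix.of fun p q =>
        if p.1 = q.1 then (d : ℂ) * (if p.2 = q.2 then 1 else 0)
        else if h : p.1 = Fin.last t ∨ q.1 = Fin.last t then
          (if p.2 = q.2 then 1 else 0)
        else
          φ (Equiv.swap (p.1.castPred (fun hh => h (Or.inl hh)))
              (q.1.castPred (fun hh => h (Or.inr hh)))) p.2 q.2
    (∀ x : Fin (t + 1) × Fin m → ℂ,
      (d - t) * (∑ v, ‖x v‖ ^ 2) ≤ (star x ⬝ᵥ Q.mulVec x).re) ∧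
    ((t : ℝ) < d → Q.PosDef ∧ IsUnit Q) := by
  intro Q
  have hQ : Q = comp _ _ _ _ ℂ (blockQ φ d) := by
    ext ⟨a, i⟩ ⟨b, j⟩
    by_cases hab : a = b
    · simp [Q, blockQ, hab, one_apply]
    · simp only [Q, blockQ, offDiagBlock, comp_apply, of_apply, if_neg hab]
      split <;> simp [one_apply]
  have hbound : ∀ x : Fin (t + 1) × Fin m → ℂ,
      (d - t) * (∑ v, ‖x v‖ ^ 2) ≤ (star x ⬝ᵥ Q.mulVec x).re := by
    intro x
    simpa [hQ] using sub_card_mul_sum_norm_sq_le_re_comp (blockQ φ d) d (by simp [blockQ])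
      (fun a b hab => by simpa [blockQ, hab] using conjTranspose_offDiagBlock_mul_self hunit a b) x
  refine ⟨hbound, fun hdt => ?_⟩
  have hpd : Q.PosDef :=
    .of_mul_sum_norm_sq_le (hQ ▸ (blockQ_isHermitian hherm d).comp) (sub_pos.2 hdt) hbound
  exact ⟨hpd, hpd.isUnit⟩

/-- Write t = n - 2 (so n - 1 = t + 1 blocks and d > n - 2 reads
d > t). Let φ : S(t) → U(m) be a unitary matrix representation whose matrices
at transpositions are hermitian. The block matrix Q with blocks
Q^{aa} = d·I, Q^{ab} = I if a ≠ b and a or b is the last index "n-1",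
and Q^{ab} = φ((ab)) otherwise, satisfies
x⁺ Q x ≥ (d - n + 2) Σ_a ‖x_a‖² for every block vector x; consequently if
d > n - 2 then Q is positive definite and invertible. -/
theorem stmt_9 (t m : ℕ) (d : ℝ) (hd : 0 < d)
    (φ : Equiv.Perm (Fin t) →* Matrix (Fin m) (Fin m) ℂ)
    (hunit : ∀ σ, (φ σ)ᴴ * φ σ = 1)
    (hherm : ∀ i j : Fin t, (φ (Equiv.swap i j))ᴴ = φ (Equiv.swap i j)) :
    let Q : Matrix (Fin (t + 1) × Fin m) (Fin (t + 1) × Fin m) ℂ :=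
      Matrix.of fun p q =>
        if p.1 = q.1 then (d : ℂ) * (if p.2 = q.2 then 1 else 0)
        else if h : p.1 = Fin.last t ∨ q.1 = Fin.last t then
          (if p.2 = q.2 then 1 else 0)
        else
          φ (Equiv.swap (p.1.castPred (fun hh => h (Or.inl hh)))
              (q.1.castPred (fun hh => h (Or.inr hh)))) p.2 q.2
    (∀ x : Fin (t + 1) × Fin m → ℂ,
      (d - t) * (∑ v, ‖x v‖ ^ 2) ≤ (star x ⬝ᵥ Q.mulVec x).re) ∧
    ((t : ℝ) < d → Q.PosDef ∧ IsUnit Q) :=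
  stmt_9_general t m d φ hunit hherm
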